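/- Let m and b be positive integers. Then ∑_{k=1}^{m} ψ₀(k)·ψ₀(k+b)/(k+b) = -(1/2)·∑_{k=1}^{m} ( ψ₀²(k+b)/k + ψ₁(k+b)/k ) - (1/b)·∑_{k=1}^{m} ψ₀(k+b)/k + (1/(2b))·( ψ₀²(b+m+1) + ψ₁(b+m+1) - ψ₀²(b+1) - ψ₁(b+1) ) + (1/2)·( ψ₀(m+1)·(ψ₀²(b+m+1) + ψ₁(b+m+1)) - ψ₀(1)·ψ₀²(b+1) - ψ₀(1)·ψ₁(b+1) ). -/

import Mathlib

/-
Write `G l = ψ₀(l)² + ψ₁(l)`. From `ψ₀(l+1) = ψ₀(l) + 1/l` and `ψ₁(l+1) = ψ₁(l) - 1/l²` one gets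
`G(l+1) - G(l) = 2ψ₀(l)/l`, so the summand is `ψ₀(k)·(G(k+b+1) - G(k+b))/2`. Summation by parts moves
the difference onto `ψ₀`, producing `-(1/2)∑ G(k+b+1)/k`; writing `G(k+b+1) = G(k+b) + 2ψ₀(k+b)/(k+b)`
and `1/(k(k+b)) = (1/b)(1/k - 1/(k+b))` turns the remainder into `-(1/b)∑ ψ₀(k+b)/k` plus another
telescoping sum of `G`.
-/

open Finset

/-- Digamma function at a positive integer argument: `ψ₀ l = -γ + ∑_{i=1}^{l-1} 1/i`. -/
noncomputable def ψ₀ (l : ℕ) : ℝ :=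
  -Real.eulerMascheroniConstant + ∑ i ∈ Finset.range (l - 1), (1 : ℝ) / (i + 1)

/-- Trigamma function at a positive integer argument: `ψ₁ l = π²/6 - ∑_{i=1}^{l-1} 1/i²`. -/
noncomputable def ψ₁ (l : ℕ) : ℝ :=
  Real.pi ^ 2 / 6 - ∑ i ∈ Finset.range (l - 1), (1 : ℝ) / (i + 1) ^ 2

/-- Tetragamma function at a positive integer argument:
`ψ₂ l = -2ζ(3) + 2∑_{i=1}^{l-1} 1/i³`, where `ζ(3) = ∑_{i=1}^∞ 1/i³`. -/
noncomputable def ψ₂ (l : ℕ) : ℝ :=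
  -2 * (∑' i : ℕ, (1 : ℝ) / (i + 1) ^ 3) +
    2 * ∑ i ∈ Finset.range (l - 1), (1 : ℝ) / (i + 1) ^ 3

lemma ψ₀_succ {n : ℕ} (hn : 0 < n) : ψ₀ (n + 1) = ψ₀ n + 1 / (n : ℝ) := by
  obtain ⟨k, rfl⟩ := Nat.exists_eq_add_one_of_ne_zero hn.ne'
  simp only [ψ₀, Nat.add_sub_cancel, sum_range_succ]
  push_cast
  ring

lemma ψ₁_succ {n : ℕ} (hn : 0 < n) : ψ₁ (n + 1) = ψ₁ n - 1 / (n : ℝ) ^ 2 := by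
  obtain ⟨k, rfl⟩ := Nat.exists_eq_add_one_of_ne_zero hn.ne'
  simp only [ψ₁, Nat.add_sub_cancel, sum_range_succ]
  push_cast
  ring

noncomputable def ψ₀SqAddψ₁ (l : ℕ) : ℝ := ψ₀ l ^ 2 + ψ₁ l

lemma ψ₀SqAddψ₁_succ {n : ℕ} (hn : 0 < n) :
    ψ₀SqAddψ₁ (n + 1) = ψ₀SqAddψ₁ n + 2 * ψ₀ n / n := by
  have hn' : (n : ℝ) ≠ 0 := by positivity
  rw [ψ₀SqAddψ₁, ψ₀SqAddψ₁, ψ₀_succ hn, ψ₁_succ hn]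
  field_simp
  ring

lemma ψ₀_mul_ψ₀_div_eq {k b : ℕ} (hk : 0 < k) (hb : 0 < b) :
    ψ₀ k * ψ₀ (k + b) / ((k : ℝ) + b) =
      (1 / 2) * (ψ₀ (k + 1) * ψ₀SqAddψ₁ (k + 1 + b) - ψ₀ k * ψ₀SqAddψ₁ (k + b)) +
        (1 / (2 * (b : ℝ))) * (ψ₀SqAddψ₁ (k + 1 + b) - ψ₀SqAddψ₁ (k + b)) -
        (1 / 2) * (ψ₀ (k + b) ^ 2 / (k : ℝ) + ψ₁ (k + b) / (k : ℝ)) -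
        (1 / (b : ℝ)) * (ψ₀ (k + b) / (k : ℝ)) := by
  have hk' : (k : ℝ) ≠ 0 := by positivity
  have hb' : (b : ℝ) ≠ 0 := by positivity
  rw [add_right_comm, ψ₀SqAddψ₁_succ (by omega), ψ₀_succ hk, ψ₀SqAddψ₁]
  push_cast
  field_simp
  ring

lemma sum_Icc_one_sub {M : Type*} [AddCommGroup M] (f : ℕ → M) (m : ℕ) :
    ∑ k ∈ Icc 1 m, (f (k + 1) - f k) = f (m + 1) - f 1 := by
  rw [← Ico_add_one_right_eq_Icc, sum_Ico_sub f (by omega)]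

theorem stmt15_general (m b : ℕ) (hb : 0 < b) :
    ∑ k ∈ Finset.Icc 1 m, ψ₀ k * ψ₀ (k + b) / ((k : ℝ) + b) =
      -(1 / 2) * ∑ k ∈ Finset.Icc 1 m,
          (ψ₀ (k + b) ^ 2 / (k : ℝ) + ψ₁ (k + b) / (k : ℝ)) -
        (1 / (b : ℝ)) * ∑ k ∈ Finset.Icc 1 m, ψ₀ (k + b) / (k : ℝ) +
        (1 / (2 * (b : ℝ))) * (ψ₀ (b + m + 1) ^ 2 + ψ₁ (b + m + 1) -
          ψ₀ (b + 1) ^ 2 - ψ₁ (b + 1)) +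
        (1 / 2) * (ψ₀ (m + 1) * (ψ₀ (b + m + 1) ^ 2 + ψ₁ (b + m + 1)) -
          ψ₀ 1 * ψ₀ (b + 1) ^ 2 - ψ₀ 1 * ψ₁ (b + 1)) := by
  rw [sum_congr rfl fun k hk ↦ ψ₀_mul_ψ₀_div_eq (mem_Icc.mp hk).1 hb]
  simp only [sum_sub_distrib, sum_add_distrib, ← mul_sum,
    sum_Icc_one_sub (fun k ↦ ψ₀ k * ψ₀SqAddψ₁ (k + b)),
    sum_Icc_one_sub (fun k ↦ ψ₀SqAddψ₁ (k + b))]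
  rw [show m + 1 + b = b + m + 1 by ring, add_comm 1 b, ψ₀SqAddψ₁, ψ₀SqAddψ₁]
  ring

theorem stmt15 (m b : ℕ) (hm : 0 < m) (hb : 0 < b) :
    ∑ k ∈ Finset.Icc 1 m, ψ₀ k * ψ₀ (k + b) / ((k : ℝ) + b) =
      -(1 / 2) * ∑ k ∈ Finset.Icc 1 m,
          (ψ₀ (k + b) ^ 2 / (k : ℝ) + ψ₁ (k + b) / (k : ℝ)) -
        (1 / (b : ℝ)) * ∑ k ∈ Finset.Icc 1 m, ψ₀ (k + b) / (k : ℝ) +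
        (1 / (2 * (b : ℝ))) * (ψ₀ (b + m + 1) ^ 2 + ψ₁ (b + m + 1) -
          ψ₀ (b + 1) ^ 2 - ψ₁ (b + 1)) +
        (1 / 2) * (ψ₀ (m + 1) * (ψ₀ (b + m + 1) ^ 2 + ψ₁ (b + m + 1)) -
          ψ₀ 1 * ψ₀ (b + 1) ^ 2 - ψ₀ 1 * ψ₁ (b + 1)) :=
  stmt15_general m b hb
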